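/- Let z₀ > 0 and k ∈ ℝ. Then there exists a unique quadruple (C₁, C₂, C₃, C₄) ∈ ℝ⁴ such that the function F(z) = 1 + (1/2)C₁e^{−2z} + C₂e^{−z} + C₃e^{z} + (1/2)C₄e^{2z} satisfies F(−z₀) = 0, F(z₀) = 0, F'(−z₀) = k, and F'(z₀) = −k. Moreover, for this unique quadruple one has F(z) = 1 + a·cosh(2z) + 2b·cosh(z) for all z, where a = (sinh z₀ − k·cosh z₀)/((2 + cosh 2z₀)·sinh z₀) and b = (k·cosh 2z₀ − 2·sinh 2z₀)/(2(2 + cosh 2z₀)·sinh z₀). -/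

import Mathlib

/-!
Write `F` in the basis `1, cosh 2z, cosh z, sinh 2z, sinh z`. The four bolting conditions
then split into two decoupled `2 × 2` linear systems: the even one, for `C₁ + C₄` and
`C₂ + C₃`, has determinant `−sinh z₀ (2 + cosh 2z₀)`, and the odd one, for `C₄ − C₁` and
`C₃ − C₂`, is homogeneous with determinant `−2 sinh³ z₀`. Both are invertible for `z₀ ≠ 0`,
so `C₁ = C₄ = a` and `C₂ = C₃ = b`, with `a`, `b` given by Cramer's rule.
-/

open Real

/-- The general solution `F(z) = 1 + (1/2)C₁e^{−2z} + C₂e^{−z} + C₃eᶻ + (1/2)C₄e^{2z}`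
of the extremal Kähler equation. -/
noncomputable def Fext (C₁ C₂ C₃ C₄ : ℝ) (z : ℝ) : ℝ :=
  1 + (1/2) * C₁ * exp (-2*z) + C₂ * exp (-z) + C₃ * exp z + (1/2) * C₄ * exp (2*z)

theorem linear_system_iff {R : Type*} [CommRing R] [NoZeroDivisors R] {p q r s u v x₀ y₀ : R}
    (hdet : p * s - q * r ≠ 0) (h₀ : p * x₀ + q * y₀ = u ∧ r * x₀ + s * y₀ = v) (x y : R) :
    (p * x + q * y = u ∧ r * x + s * y = v) ↔ x = x₀ ∧ y = y₀ := by
  constructor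
  · rintro ⟨h₁, h₂⟩
    have hx : (x - x₀) * (p * s - q * r) = 0 := by
      linear_combination s * h₁ - q * h₂ - s * h₀.1 + q * h₀.2
    have hy : (y - y₀) * (p * s - q * r) = 0 := by
      linear_combination p * h₂ - r * h₁ - p * h₀.2 + r * h₀.1
    exact ⟨sub_eq_zero.mp ((mul_eq_zero.mp hx).resolve_right hdet),
      sub_eq_zero.mp ((mul_eq_zero.mp hy).resolve_right hdet)⟩
  · rintro ⟨rfl, rfl⟩
    exact h₀

def BoltingConditions (F : ℝ → ℝ) (z₀ k : ℝ) : Prop :=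
  F (-z₀) = 0 ∧ F z₀ = 0 ∧ deriv F (-z₀) = k ∧ deriv F z₀ = -k

noncomputable def boltingA (z₀ k : ℝ) : ℝ :=
  (sinh z₀ - k * cosh z₀) / ((2 + cosh (2*z₀)) * sinh z₀)

noncomputable def boltingB (z₀ k : ℝ) : ℝ :=
  (k * cosh (2*z₀) - 2 * sinh (2*z₀)) / (2 * (2 + cosh (2*z₀)) * sinh z₀)

section Fext

variable (C₁ C₂ C₃ C₄ : ℝ)

theorem Fext_eq_cosh_sinh (z : ℝ) :
    Fext C₁ C₂ C₃ C₄ z = 1 + (C₁ + C₄) / 2 * cosh (2*z) + (C₂ + C₃) * cosh z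
      + (C₄ - C₁) / 2 * sinh (2*z) + (C₃ - C₂) * sinh z := by
  simp only [Fext, cosh_eq, sinh_eq, neg_mul]
  ring

theorem hasDerivAt_Fext (z : ℝ) :
    HasDerivAt (Fext C₁ C₂ C₃ C₄)
      ((C₁ + C₄) * sinh (2*z) + (C₂ + C₃) * sinh z
        + (C₄ - C₁) * cosh (2*z) + (C₃ - C₂) * cosh z) z := by
  have hcosh₂ : HasDerivAt (fun x => cosh (2*x)) (sinh (2*z) * 2) z := by
    simpa using ((hasDerivAt_id z).const_mul 2).cosh
  have hsinh₂ : HasDerivAt (fun x => sinh (2*x)) (cosh (2*z) * 2) z := by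
    simpa using ((hasDerivAt_id z).const_mul 2).sinh
  rw [funext (Fext_eq_cosh_sinh C₁ C₂ C₃ C₄)]
  exact ((((hcosh₂.const_mul ((C₁ + C₄) / 2)).const_add 1).add
    ((hasDerivAt_cosh z).const_mul (C₂ + C₃))).add (hsinh₂.const_mul ((C₄ - C₁) / 2))).add
    ((hasDerivAt_sinh z).const_mul (C₃ - C₂)) |>.congr_deriv (by ring)

theorem boltingConditions_Fext_iff (z₀ k : ℝ) :
    BoltingConditions (Fext C₁ C₂ C₃ C₄) z₀ k ↔
      (cosh (2*z₀) * (C₁ + C₄) + 2 * cosh z₀ * (C₂ + C₃) = -2 ∧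
        sinh (2*z₀) * (C₁ + C₄) + sinh z₀ * (C₂ + C₃) = -k) ∧
      (sinh (2*z₀) * (C₄ - C₁) + 2 * sinh z₀ * (C₃ - C₂) = 0 ∧
        cosh (2*z₀) * (C₄ - C₁) + cosh z₀ * (C₃ - C₂) = 0) := by
  simp only [BoltingConditions, Fext_eq_cosh_sinh, (hasDerivAt_Fext _ _ _ _ _).deriv,
    mul_neg, cosh_neg, sinh_neg]
  constructor
  · rintro ⟨h₁, h₂, h₃, h₄⟩
    exact ⟨⟨by linarith, by linarith⟩, by linarith, by linarith⟩
  · rintro ⟨⟨h₁, h₂⟩, h₃, h₄⟩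
    exact ⟨by linarith, by linarith, by linarith, by linarith⟩

end Fext

theorem bolting_even_det_ne_zero {z₀ : ℝ} (hz₀ : z₀ ≠ 0) :
    cosh (2*z₀) * sinh z₀ - 2 * cosh z₀ * sinh (2*z₀) ≠ 0 := by
  have hs : sinh z₀ ≠ 0 := sinh_ne_zero.mpr hz₀
  have : cosh (2*z₀) * sinh z₀ - 2 * cosh z₀ * sinh (2*z₀)
      = -(sinh z₀ * (2 + cosh (2*z₀))) := by
    rw [cosh_two_mul, sinh_two_mul]; linear_combination (-2 * sinh z₀) * cosh_sq z₀
  rw [this, neg_ne_zero]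
  exact mul_ne_zero hs (by positivity)

theorem bolting_odd_det_ne_zero {z₀ : ℝ} (hz₀ : z₀ ≠ 0) :
    sinh (2*z₀) * cosh z₀ - 2 * sinh z₀ * cosh (2*z₀) ≠ 0 := by
  have : sinh (2*z₀) * cosh z₀ - 2 * sinh z₀ * cosh (2*z₀) = -2 * sinh z₀ ^ 3 := by
    rw [cosh_two_mul, sinh_two_mul]; ring
  rw [this]
  exact mul_ne_zero (by norm_num) (pow_ne_zero 3 (sinh_ne_zero.mpr hz₀))

theorem bolting_even_system_solution {z₀ : ℝ} (hz₀ : z₀ ≠ 0) (k : ℝ) :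
    cosh (2*z₀) * (2 * boltingA z₀ k) + 2 * cosh z₀ * (2 * boltingB z₀ k) = -2 ∧
      sinh (2*z₀) * (2 * boltingA z₀ k) + sinh z₀ * (2 * boltingB z₀ k) = -k := by
  have hs : sinh z₀ ≠ 0 := sinh_ne_zero.mpr hz₀
  have hd : 2 + cosh (2*z₀) ≠ 0 := by positivity
  unfold boltingA boltingB
  constructor <;> field_simp <;> rw [cosh_two_mul, sinh_two_mul]
  · linear_combination (-2 * sinh z₀) * cosh_sq z₀
  · linear_combination (-2 * k * sinh z₀) * cosh_sq z₀

theorem boltingConditions_Fext_iff_eq {z₀ : ℝ} (hz₀ : z₀ ≠ 0) (k C₁ C₂ C₃ C₄ : ℝ) :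
    BoltingConditions (Fext C₁ C₂ C₃ C₄) z₀ k ↔
      C₁ = boltingA z₀ k ∧ C₂ = boltingB z₀ k ∧ C₃ = boltingB z₀ k ∧ C₄ = boltingA z₀ k := by
  rw [boltingConditions_Fext_iff,
    linear_system_iff (bolting_even_det_ne_zero hz₀) (bolting_even_system_solution hz₀ k),
    linear_system_iff (x₀ := 0) (y₀ := 0) (bolting_odd_det_ne_zero hz₀) (by simp)]
  constructor
  · rintro ⟨⟨h₁, h₂⟩, h₃, h₄⟩
    exact ⟨by linarith, by linarith, by linarith, by linarith⟩
  · rintro ⟨rfl, rfl, rfl, rfl⟩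
    exact ⟨⟨by ring, by ring⟩, by ring, by ring⟩

/-- for every `z₀ > 0` and `k` there is a unique quadruple
`(C₁, C₂, C₃, C₄)` with `F(±z₀) = 0`, `F'(−z₀) = k`, `F'(z₀) = −k`; and for that
quadruple `F(z) = 1 + a·cosh 2z + 2b·cosh z` with the stated `a`, `b`. -/
theorem hirzebruch_bolting_conditions (z₀ k : ℝ) (hz₀ : 0 < z₀) :
    (∃! p : ℝ × ℝ × ℝ × ℝ,
      Fext p.1 p.2.1 p.2.2.1 p.2.2.2 (-z₀) = 0 ∧
      Fext p.1 p.2.1 p.2.2.1 p.2.2.2 z₀ = 0 ∧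
      deriv (Fext p.1 p.2.1 p.2.2.1 p.2.2.2) (-z₀) = k ∧
      deriv (Fext p.1 p.2.1 p.2.2.1 p.2.2.2) z₀ = -k) ∧
    (∀ C₁ C₂ C₃ C₄ : ℝ,
      (Fext C₁ C₂ C₃ C₄ (-z₀) = 0 ∧ Fext C₁ C₂ C₃ C₄ z₀ = 0 ∧
        deriv (Fext C₁ C₂ C₃ C₄) (-z₀) = k ∧ deriv (Fext C₁ C₂ C₃ C₄) z₀ = -k) →
      ∀ z : ℝ, Fext C₁ C₂ C₃ C₄ z =
        1 + (Real.sinh z₀ - k * Real.cosh z₀) / ((2 + Real.cosh (2*z₀)) * Real.sinh z₀)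
              * Real.cosh (2*z)
          + 2 * ((k * Real.cosh (2*z₀) - 2 * Real.sinh (2*z₀))
              / (2 * (2 + Real.cosh (2*z₀)) * Real.sinh z₀)) * Real.cosh z) := by
  have key := boltingConditions_Fext_iff_eq hz₀.ne' k
  refine ⟨⟨(boltingA z₀ k, boltingB z₀ k, boltingB z₀ k, boltingA z₀ k),
    (key _ _ _ _).mpr ⟨rfl, rfl, rfl, rfl⟩, ?_⟩, ?_⟩
  · rintro ⟨C₁, C₂, C₃, C₄⟩ h
    obtain ⟨rfl, rfl, rfl, rfl⟩ := (key C₁ C₂ C₃ C₄).mp h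
    rfl
  · intro C₁ C₂ C₃ C₄ h z
    obtain ⟨rfl, rfl, rfl, rfl⟩ := (key C₁ C₂ C₃ C₄).mp h
    rw [Fext_eq_cosh_sinh, boltingA, boltingB]
    ring
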